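/- Every hyperbolic trapezoid A1A2B2B1 (with right angles at B1, B2) satisfies area(A1A2B2B1) ≤ |A1A2|, i.e., its area is at most the length of its upper edge. -/

import Mathlib

open Real

/-! Hyperboloid model of the hyperbolic plane `H²` of curvature `-1`:
points are `p : ℝ × ℝ × ℝ` with `mink p p = 1` and `p.1 > 0`, where `mink` is the
Minkowski bilinear form of signature `(+,-,-)`.  Distances satisfy
`cosh (hdist p q) = mink p q` and angles are computed by the hyperbolic cosine law. -/

/-- Minkowski bilinear form on `ℝ^{1,2}`. -/
def mink (p q : ℝ × ℝ × ℝ) : ℝ := p.1 * q.1 - p.2.1 * q.2.1 - p.2.2 * q.2.2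

/-- Inverse hyperbolic cosine. -/
noncomputable def arcosh (x : ℝ) : ℝ := Real.log (x + Real.sqrt (x ^ 2 - 1))

/-- Hyperbolic distance between points of the hyperboloid. -/
noncomputable def hdist (p q : ℝ × ℝ × ℝ) : ℝ := _root_.arcosh (mink p q)

/-- Angle at `p` between the geodesic segments from `p` to `q` and from `p` to `r`. -/
noncomputable def hangle (p q r : ℝ × ℝ × ℝ) : ℝ :=
  Real.arccos ((mink p q * mink p r - mink q r) /
    (Real.sqrt (mink p q ^ 2 - 1) * Real.sqrt (mink p r ^ 2 - 1)))

/-- The point at signed arclength `s` along the base geodesic line `{x₂ = 0}` (the "lower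
line"), moved to (signed) height `h` along the perpendicular at that point. -/
noncomputable def Pt (s h : ℝ) : ℝ × ℝ × ℝ :=
  (Real.cosh s * Real.cosh h, Real.sinh s * Real.cosh h, Real.sinh h)

/-! The area of the trapezoid is `π - α₁₂ - α₂₁ = arcsin u + arcsin v` with `u = cos α₁₂`,
`v = cos α₂₁`. Write `u = tanh s`, `v = tanh t`; then `arcsin u = gd s` for the Gudermannian
`gd = arctan ∘ sinh`, which is odd and 1-Lipschitz, so the area is at most `s + t` once `s + t ≥ 0`.
With `d = |A₁A₂|`, the inequality `tanh (s + t) = (u + v) / (1 + u v) ≤ tanh d` becomes a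
polynomial inequality in `cosh a`, `cosh hᵢ`, `sinh hᵢ` whose defect factors into nonnegative terms. -/

lemma lipschitzWith_arctan_sinh : LipschitzWith 1 fun t => arctan (sinh t) := by
  have hderiv (t : ℝ) : HasDerivAt (fun t => arctan (sinh t)) (cosh t)⁻¹ t := by
    convert (hasDerivAt_sinh t).arctan using 1
    rw [← cosh_sq', sq]
    field_simp [(cosh_pos t).ne']
  refine lipschitzWith_of_nnnorm_deriv_le (fun t => (hderiv t).differentiableAt) fun t => ?_
  rw [(hderiv t).deriv, ← NNReal.coe_le_coe, coe_nnnorm, Real.norm_eq_abs,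
    abs_of_pos (inv_pos.mpr (cosh_pos t))]
  exact inv_le_one_of_one_le₀ (one_le_cosh t)

lemma arctan_sinh_add_arctan_sinh_le {s t : ℝ} (hst : 0 ≤ s + t) :
    arctan (sinh s) + arctan (sinh t) ≤ s + t := by
  -- by oddness the left side is `gd t - gd (-s)`, and `t - (-s) = s + t`
  have := lipschitzWith_arctan_sinh.dist_le_mul t (-s)
  rw [sinh_neg, arctan_neg, Real.dist_eq, Real.dist_eq, sub_neg_eq_add, sub_neg_eq_add,
    add_comm t, abs_of_nonneg hst, NNReal.coe_one, one_mul] at this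
  linarith [le_abs_self (arctan (sinh t) + arctan (sinh s))]

lemma arcsin_tanh (t : ℝ) : arcsin (tanh t) = arctan (sinh t) := by
  rw [arctan_eq_arcsin, ← cosh_sq', sqrt_sq (cosh_pos t).le, tanh_eq_sinh_div_cosh]

lemma arcsin_add_arcsin_le {u v d : ℝ} (hu : u ∈ Set.Ioo (-1) 1) (hv : v ∈ Set.Ioo (-1) 1)
    (huv : 0 ≤ u + v) (hd : cosh d * (u + v) ≤ sinh d * (1 + u * v)) :
    arcsin u + arcsin v ≤ d := by
  obtain ⟨s, rfl⟩ : ∃ s, tanh s = u := ⟨artanh u, tanh_artanh hu⟩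
  obtain ⟨t, rfl⟩ : ∃ t, tanh t = v := ⟨artanh v, tanh_artanh hv⟩
  have hcosh : 0 < cosh s * cosh t := mul_pos (cosh_pos s) (cosh_pos t)
  have hsinh_add : sinh (s + t) = cosh s * cosh t * (tanh s + tanh t) := by
    simp only [tanh_eq_sinh_div_cosh, sinh_add]
    field_simp [(cosh_pos s).ne', (cosh_pos t).ne']
  have hcosh_add : cosh (s + t) = cosh s * cosh t * (1 + tanh s * tanh t) := by
    simp only [tanh_eq_sinh_div_cosh, cosh_add]
    field_simp [(cosh_pos s).ne', (cosh_pos t).ne']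
  have hst : 0 ≤ s + t := sinh_nonneg_iff.mp (hsinh_add ▸ mul_nonneg hcosh.le huv)
  have hstd : s + t ≤ d := by
    have hsinh_sub : sinh (s + t - d) = cosh s * cosh t * (cosh d * (tanh s + tanh t)
        - sinh d * (1 + tanh s * tanh t)) := by
      rw [sinh_sub, hsinh_add, hcosh_add]; ring
    have := sinh_nonpos_iff.mp (hsinh_sub ▸ mul_nonpos_of_nonneg_of_nonpos hcosh.le (by linarith))
    linarith
  calc arcsin (tanh s) + arcsin (tanh t) = arctan (sinh s) + arctan (sinh t) := by
        rw [arcsin_tanh, arcsin_tanh]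
    _ ≤ s + t := arctan_sinh_add_arctan_sinh_le hst
    _ ≤ d := hstd

lemma mink_comm (p q : ℝ × ℝ × ℝ) : mink p q = mink q p := by
  unfold mink; ring

lemma hdist_comm (p q : ℝ × ℝ × ℝ) : hdist p q = hdist q p := by
  rw [hdist, hdist, mink_comm]

lemma cosh_hdist {p q : ℝ × ℝ × ℝ} (hpq : 1 ≤ mink p q) : cosh (hdist p q) = mink p q :=
  Real.cosh_arcosh hpq

lemma sinh_hdist {p q : ℝ × ℝ × ℝ} (hpq : 1 ≤ mink p q) :
    sinh (hdist p q) = √(mink p q ^ 2 - 1) :=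
  Real.sinh_arcosh hpq

lemma sinh_hdist_nonneg {p q : ℝ × ℝ × ℝ} (hpq : 1 ≤ mink p q) : 0 ≤ sinh (hdist p q) :=
  sinh_nonneg_iff.mpr (Real.arcosh_nonneg hpq)

lemma mink_Pt (s h s' h' : ℝ) :
    mink (Pt s h) (Pt s' h') = cosh (s - s') * cosh h * cosh h' - sinh h * sinh h' := by
  simp only [mink, Pt, cosh_sub]; ring

lemma one_le_mink_Pt (s h s' h' : ℝ) : 1 ≤ mink (Pt s h) (Pt s' h') := by
  have hcosh : cosh h * cosh h' ≤ cosh (s - s') * (cosh h * cosh h') :=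
    le_mul_of_one_le_left (mul_pos (cosh_pos h) (cosh_pos h')).le (one_le_cosh _)
  have := one_le_cosh (h - h')
  rw [cosh_sub] at this
  rw [mink_Pt]; linarith

/-- `sinh² d = (sinh d cos α)² + (sinh d sin α)²`, where `α` is the angle at `Pt s h` in the
right-angled triangle with third vertex `Pt s 0`; the second term is the sine rule
`sinh d sin α = sinh (s - s') cosh h'`. -/
lemma sinh_hdist_Pt_sq (s h s' h' : ℝ) :
    sinh (hdist (Pt s h) (Pt s' h')) ^ 2 =
      (cosh (s - s') * cosh h' * sinh h - cosh h * sinh h') ^ 2 + (sinh (s - s') * cosh h') ^ 2 := by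
  have hc := one_le_mink_Pt s h s' h'
  rw [sinh_hdist hc, sq_sqrt (sub_nonneg.mpr (one_le_pow₀ hc)), mink_Pt]
  linear_combination (cosh (s - s') ^ 2 * cosh h' ^ 2 - sinh h' ^ 2) * cosh_sq h
    + cosh h' ^ 2 * cosh_sq (s - s') + cosh_sq h'

lemma abs_cosh_mul_sub_lt_sinh_hdist {s s' : ℝ} (h h' : ℝ) (hs : s ≠ s') :
    |cosh (s - s') * cosh h' * sinh h - cosh h * sinh h'| < sinh (hdist (Pt s h) (Pt s' h')) := by
  have hperp : 0 < (sinh (s - s') * cosh h') ^ 2 :=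
    pow_two_pos_of_ne_zero (mul_ne_zero (sinh_ne_zero.mpr (sub_ne_zero.mpr hs)) (cosh_pos h').ne')
  refine abs_lt_of_sq_lt_sq ?_ (sinh_hdist_nonneg (one_le_mink_Pt _ _ _ _))
  rw [sinh_hdist_Pt_sq]
  exact lt_add_of_pos_right _ hperp

noncomputable def cosFootAngle (s h s' h' : ℝ) : ℝ :=
  (cosh (s - s') * cosh h' * sinh h - cosh h * sinh h') / sinh (hdist (Pt s h) (Pt s' h'))

lemma hangle_Pt_foot (s h s' h' : ℝ) (hh : 0 < h) :
    hangle (Pt s h) (Pt s' h') (Pt s 0) = arccos (cosFootAngle s h s' h') := by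
  have hsqrt : √(cosh h ^ 2 - 1) = sinh h := by
    rw [cosh_sq, add_sub_cancel_right, sqrt_sq (sinh_pos_iff.mpr hh).le]
  have hnum : mink (Pt s h) (Pt s' h') * cosh h - cosh (s' - s) * cosh h' =
      sinh h * (cosh (s - s') * cosh h' * sinh h - cosh h * sinh h') := by
    rw [mink_Pt, ← cosh_neg (s' - s), neg_sub]
    linear_combination cosh (s - s') * cosh h' * cosh_sq h
  have hfoot : mink (Pt s h) (Pt s 0) = cosh h := by simp [mink_Pt]
  have hfoot' : mink (Pt s' h') (Pt s 0) = cosh (s' - s) * cosh h' := by simp [mink_Pt]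
  rw [hangle, cosFootAngle, sinh_hdist (one_le_mink_Pt _ _ _ _), hfoot, hfoot', hsqrt, hnum,
    mul_comm √(mink (Pt s h) (Pt s' h') ^ 2 - 1), mul_div_mul_left _ _ (sinh_pos_iff.mpr hh).ne']

lemma cosFootAngle_mem_Ioo {s s' : ℝ} (h h' : ℝ) (hs : s ≠ s') :
    cosFootAngle s h s' h' ∈ Set.Ioo (-1) 1 := by
  have hlt := abs_cosh_mul_sub_lt_sinh_hdist h h' hs
  have hS_pos := (abs_nonneg _).trans_lt hlt
  rwa [cosFootAngle, Set.mem_Ioo, ← abs_lt, abs_div, abs_of_pos hS_pos, div_lt_one hS_pos]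

lemma cosFootAngle_add_cosFootAngle_nonneg (a : ℝ) {h₁ h₂ : ℝ} (h : 0 ≤ h₁ + h₂) :
    0 ≤ cosFootAngle 0 h₁ a h₂ + cosFootAngle a h₂ 0 h₁ := by
  have hnum : cosh (0 - a) * cosh h₂ * sinh h₁ - cosh h₁ * sinh h₂ +
      (cosh (a - 0) * cosh h₁ * sinh h₂ - cosh h₂ * sinh h₁) = (cosh a - 1) * sinh (h₁ + h₂) := by
    rw [zero_sub, cosh_neg, sub_zero, sinh_add]; ring
  rw [cosFootAngle, cosFootAngle, hdist_comm (Pt a h₂), ← add_div, hnum]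
  exact div_nonneg (mul_nonneg (sub_nonneg.mpr (one_le_cosh a)) (sinh_nonneg_iff.mpr h))
    (sinh_hdist_nonneg (one_le_mink_Pt _ _ _ _))

lemma cosh_mul_cosFootAngle_add_le {a : ℝ} (h₁ h₂ : ℝ) (ha : a ≠ 0) :
    cosh (hdist (Pt 0 h₁) (Pt a h₂)) * (cosFootAngle 0 h₁ a h₂ + cosFootAngle a h₂ 0 h₁) ≤
      sinh (hdist (Pt 0 h₁) (Pt a h₂)) * (1 + cosFootAngle 0 h₁ a h₂ * cosFootAngle a h₂ 0 h₁) := by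
  have hS_pos := (abs_nonneg _).trans_lt (abs_cosh_mul_sub_lt_sinh_hdist h₁ h₂ (Ne.symm ha))
  have hc : cosh (hdist (Pt 0 h₁) (Pt a h₂)) = cosh a * cosh h₁ * cosh h₂ - sinh h₁ * sinh h₂ := by
    rw [cosh_hdist (one_le_mink_Pt _ _ _ _), mink_Pt, zero_sub, cosh_neg]
  rw [cosFootAngle, cosFootAngle, hdist_comm (Pt a h₂), zero_sub, cosh_neg, sub_zero]
  set S := sinh (hdist (Pt 0 h₁) (Pt a h₂))
  set c := cosh (hdist (Pt 0 h₁) (Pt a h₂))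
  set p := cosh a * cosh h₂ * sinh h₁ - cosh h₁ * sinh h₂
  set q := cosh a * cosh h₁ * sinh h₂ - cosh h₂ * sinh h₁
  have hS : S ^ 2 = c ^ 2 - 1 := by rw [cosh_sq]; ring
  have hgap : S * (1 + p / S * (q / S)) - c * (p / S + q / S) = (S ^ 2 + p * q - c * (p + q)) / S := by
    field_simp
  rw [← sub_nonneg, hgap]
  refine div_nonneg ?_ hS_pos.le
  -- `cosh h - sinh h = exp (-h)` and `cosh h + sinh h = exp h` make the factors positive.
  have hfact : S ^ 2 + p * q - c * (p + q) = (cosh a - 1) * ((cosh h₁ - sinh h₁) *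
      (cosh h₂ - sinh h₂)) * ((cosh h₁ + sinh h₁) * (cosh h₂ + sinh h₂) + c) := by
    rw [hS, hc]
    linear_combination (cosh h₂ ^ 2 - sinh h₂ ^ 2) * cosh_sq h₁ + cosh_sq h₂
  rw [hfact, cosh_sub_sinh, cosh_sub_sinh, cosh_add_sinh, cosh_add_sinh]
  have hc_pos : 0 < c := cosh_pos _
  have := sub_nonneg.mpr (one_le_cosh a)
  positivity

/-- The trapezoid has lower vertices `B₁ = Pt 0 0`, `B₂ = Pt a 0` and upper vertices
`A₁ = Pt 0 h₁`, `A₂ = Pt a h₂`; its area is the angle defect. -/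
theorem trapezoid_area_le_upper_edge (a h₁ h₂ : ℝ) (ha : 0 < a) (h1 : 0 < h₁) (h2 : 0 < h₂) :
    2 * π - (hangle (Pt 0 h₁) (Pt a h₂) (Pt 0 0) + hangle (Pt a h₂) (Pt 0 h₁) (Pt a 0)
        + π / 2 + π / 2) ≤
      hdist (Pt 0 h₁) (Pt a h₂) := by
  have harea := arcsin_add_arcsin_le (cosFootAngle_mem_Ioo h₁ h₂ ha.ne)
    (cosFootAngle_mem_Ioo h₂ h₁ ha.ne') (cosFootAngle_add_cosFootAngle_nonneg a (by linarith))
    (cosh_mul_cosFootAngle_add_le h₁ h₂ ha.ne')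
  rw [hangle_Pt_foot 0 h₁ a h₂ h1, hangle_Pt_foot a h₂ 0 h₁ h2,
    arccos_eq_pi_div_two_sub_arcsin, arccos_eq_pi_div_two_sub_arcsin]
  linarith
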